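/- Let (X,d,μ) be a doubling metric measure space with dimension n and m ≥ 2, and let (p_t)_{t>0} be jointly measurable kernels satisfying: p_t(x,y) ≥ 0 for all t, x, y; ∫_X p_t(x,y) dμ(y) ≤ 1 for all t > 0 and x ∈ X; the semigroup (Chapman–Kolmogorov) identity ∫_X p_t(x,z) p_r(z,y) dμ(z) = p_{t+r}(x,y) for all t, r > 0 and x, y ∈ X; and the m-order Gaussian upper bound (GE_m). For a bounded measurable f : X → ℂ set S_t f(x) := ∫_X p_t(x,y) f(y) dμ(y). Then there exists C > 0, independent of f, such that sup_{t>0} sup_{x∈X} ( ⨍_{B(x,t^{1/m})} | f(y) − 2 S_t f(y) + S_{2t} f(y) |² dμ(y) )^{1/2} ≤ C · sup_{t>0} sup_{x∈X} ( ⨍_{B(x,t^{1/m})} | f(y) − S_t f(y) |² dμ(y) )^{1/2}. (Note f − 2S_t f + S_{2t} f = (I − S_t)² f.) -/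

import Mathlib

/-!
Since `(I - S_t)² f = 2 (I - S_t) f - (I - S_{2t}) f`, Minkowski's inequality in `L²` of the ball
`B = B(x, t^{1/m})` bounds the second-order average by twice the first-order average at time `t`
plus the `L²(B)` average of `(I - S_{2t}) f`. As `B` lies in `B(x, (2t)^{1/m}) = 2^{1/m} B`,
doubling bounds the latter by `(C_d 2^{n/m})^{1/2}` times the first-order average at time `2t`.
-/

open Metric MeasureTheory ENNReal

section

variable {X : Type*} [MeasurableSpace X]

noncomputable def kernelOperator (μ : Measure X) (p : X → X → ℝ) (f : X → ℂ) (x : X) : ℂ :=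
  ∫ y, (p x y : ℂ) * f y ∂μ

theorem measurable_kernelOperator {μ : Measure X} [SFinite μ] {p : X → X → ℝ} {f : X → ℂ}
    (hp : Measurable (Function.uncurry p)) (hf : Measurable f) :
    Measurable (kernelOperator μ p f) :=
  (((Complex.measurable_ofReal.comp hp).mul (hf.comp measurable_snd)).stronglyMeasurable
    |>.integral_prod_right').measurable

variable [PseudoMetricSpace X]

theorem sigmaFinite_of_measure_ball_lt_top {μ : Measure X}
    (h : ∀ (x : X) (r : ℝ), 0 < r → μ (ball x r) < ∞) : SigmaFinite μ := by
  rcases isEmpty_or_nonempty X with _ | ⟨⟨x₀⟩⟩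
  · infer_instance
  refine Measure.sigmaFinite_of_countable (Set.countable_range fun k : ℕ => ball x₀ (k + 1))
    ?_ ?_
  · rintro _ ⟨k, rfl⟩
    exact h x₀ _ k.cast_add_one_pos
  · rw [Set.sUnion_range]
    exact Set.eq_univ_of_subset
      (Set.iUnion_mono fun k => ball_subset_ball (lt_add_one (k : ℝ)).le) (iUnion_ball_nat x₀)

variable {E : Type*} [NormedAddCommGroup E]

/-- `(⨍_{B(x,r)} ‖g‖²)^{1/2}`, written as in the statement so that its averages unfold to it. -/
noncomputable def ballRMS (μ : Measure X) (g : X → E) (x : X) (r : ℝ) : ℝ≥0∞ :=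
  ((μ (ball x r))⁻¹ * ∫⁻ y in ball x r, ‖g y‖ₑ ^ 2 ∂μ) ^ ((1 : ℝ) / 2)

theorem ballRMS_eq_mul_eLpNorm (μ : Measure X) (g : X → E) (x : X) (r : ℝ) :
    ballRMS μ g x r =
      (μ (ball x r))⁻¹ ^ ((1 : ℝ) / 2) * eLpNorm g 2 (μ.restrict (ball x r)) := by
  rw [ballRMS, eLpNorm_eq_lintegral_rpow_enorm_toReal two_ne_zero ofNat_ne_top,
    ENNReal.mul_rpow_of_nonneg _ _ (by norm_num)]
  simp

variable {μ : Measure X}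

theorem ballRMS_smul_sub_le {𝕜 : Type*} [NormedDivisionRing 𝕜] [Module 𝕜 E] [NormSMulClass 𝕜 E]
    (c : 𝕜) {u v : X → E} (hu : AEStronglyMeasurable u μ) (hv : AEStronglyMeasurable v μ)
    (x : X) (r : ℝ) :
    ballRMS μ (c • u - v) x r ≤ ‖c‖ₑ * ballRMS μ u x r + ballRMS μ v x r := by
  simp only [ballRMS_eq_mul_eLpNorm]
  calc (μ (ball x r))⁻¹ ^ ((1 : ℝ) / 2) * eLpNorm (c • u - v) 2 (μ.restrict (ball x r))
      ≤ (μ (ball x r))⁻¹ ^ ((1 : ℝ) / 2) * (‖c‖ₑ * eLpNorm u 2 (μ.restrict (ball x r)) +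
          eLpNorm v 2 (μ.restrict (ball x r))) := by
        gcongr
        rw [← eLpNorm_const_smul]
        exact eLpNorm_sub_le (hu.restrict.const_smul c) hv.restrict one_le_two
    _ = _ := by ring

theorem ballRMS_le_of_measure_ball_le {K : ℝ≥0∞} (hK₀ : K ≠ 0) (hK : K ≠ ∞) (g : X → E)
    {x : X} {r R : ℝ} (hrR : r ≤ R) (hμ : μ (ball x R) ≤ K * μ (ball x r)) :
    ballRMS μ g x r ≤ K ^ ((1 : ℝ) / 2) * ballRMS μ g x R := by
  have hinv : (μ (ball x r))⁻¹ ≤ K * (μ (ball x R))⁻¹ := by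
    rw [ENNReal.inv_le_iff_inv_le, ENNReal.mul_inv (.inl hK₀) (.inl hK), inv_inv]
    exact (ENNReal.inv_mul_le_iff hK₀ hK).mpr hμ
  simp only [ballRMS_eq_mul_eLpNorm]
  calc (μ (ball x r))⁻¹ ^ ((1 : ℝ) / 2) * eLpNorm g 2 (μ.restrict (ball x r))
      ≤ (K * (μ (ball x R))⁻¹) ^ ((1 : ℝ) / 2) * eLpNorm g 2 (μ.restrict (ball x R)) := by
        gcongr
    _ = _ := by rw [ENNReal.mul_rpow_of_nonneg _ _ (by norm_num), mul_assoc]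

theorem ballRMS_le_of_doubling {Cd n : ℝ} (hCd : 0 < Cd)
    (hdoub : ∀ (x : X) (r lam : ℝ), 0 < r → 1 ≤ lam →
      μ (ball x (lam * r)) ≤ ENNReal.ofReal (Cd * lam ^ n) * μ (ball x r))
    (g : X → E) (x : X) {r lam : ℝ} (hr : 0 < r) (hlam : 1 ≤ lam) :
    ballRMS μ g x r ≤
      ENNReal.ofReal ((Cd * lam ^ n) ^ ((1 : ℝ) / 2)) * ballRMS μ g x (lam * r) := by
  have hK : 0 < Cd * lam ^ n := by positivity
  rw [← ENNReal.ofReal_rpow_of_pos hK]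
  exact ballRMS_le_of_measure_ball_le (ENNReal.ofReal_pos.2 hK).ne' ofReal_ne_top g
    (le_mul_of_one_le_left hr.le hlam) (hdoub x r lam hr hlam)

end

theorem bmo_second_order_dominated_by_first_order_general
    {X : Type*} [MetricSpace X] [MeasurableSpace X] [BorelSpace X]
    (μ : Measure X)
    (hball : ∀ (x : X) (r : ℝ), 0 < r → 0 < μ (ball x r) ∧ μ (ball x r) < ⊤)
    (Cd n : ℝ) (hCd : 0 < Cd)
    (hdoub : ∀ (x : X) (r lam : ℝ), 0 < r → 1 ≤ lam →
      μ (ball x (lam * r)) ≤ ENNReal.ofReal (Cd * lam ^ n) * μ (ball x r))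
    (m : ℝ) (hm : 2 ≤ m)
    (p : ℝ → X → X → ℝ)
    (hmeas : ∀ t : ℝ, 0 < t → Measurable (Function.uncurry (p t))) :
    ∃ C > (0 : ℝ),
      ∀ f : X → ℂ, Measurable f → (∃ Cb : ℝ, ∀ y : X, ‖f y‖ ≤ Cb) →
        (⨆ (t : ℝ) (_ : 0 < t) (x : X),
            ((μ (ball x (t ^ (1 / m))))⁻¹ *
                ∫⁻ y in ball x (t ^ (1 / m)),
                  (‖f y - 2 * (∫ w, (p t y w : ℂ) * f w ∂μ) +
                      ∫ w, (p (2 * t) y w : ℂ) * f w ∂μ‖₊ : ℝ≥0∞) ^ 2 ∂μ) ^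
              ((1 : ℝ) / 2)) ≤
          ENNReal.ofReal C *
            ⨆ (t : ℝ) (_ : 0 < t) (x : X),
              ((μ (ball x (t ^ (1 / m))))⁻¹ *
                  ∫⁻ y in ball x (t ^ (1 / m)),
                    (‖f y - ∫ w, (p t y w : ℂ) * f w ∂μ‖₊ : ℝ≥0∞) ^ 2 ∂μ) ^
                ((1 : ℝ) / 2) := by
  have : SigmaFinite μ := sigmaFinite_of_measure_ball_lt_top fun x r hr => (hball x r hr).2
  set lam : ℝ := 2 ^ (1 / m)
  have hlam : 1 ≤ lam := Real.one_le_rpow one_le_two (by positivity)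
  set Cdoub : ℝ := (Cd * lam ^ n) ^ (1 / 2 : ℝ)
  refine ⟨2 + Cdoub, by positivity, fun f hf _ => ?_⟩
  set D : ℝ → X → ℂ := fun s => f - kernelOperator μ (p s) f
  change ⨆ (t : ℝ) (_ : 0 < t) (x : X),
      ballRMS μ (fun y => f y - 2 * kernelOperator μ (p t) f y
        + kernelOperator μ (p (2 * t)) f y) x (t ^ (1 / m)) ≤
    _ * ⨆ (t : ℝ) (_ : 0 < t) (x : X), ballRMS μ (D t) x (t ^ (1 / m))
  set N := ⨆ (t : ℝ) (_ : 0 < t) (x : X), ballRMS μ (D t) x (t ^ (1 / m))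
  have hN : ∀ t, 0 < t → ∀ x, ballRMS μ (D t) x (t ^ (1 / m)) ≤ N :=
    fun t ht x => le_iSup₂_of_le t ht (le_iSup_of_le x le_rfl)
  have hD : ∀ t, 0 < t → AEStronglyMeasurable (D t) μ :=
    fun t ht => (hf.sub (measurable_kernelOperator (hmeas t ht) hf)).aestronglyMeasurable
  have h2 : ‖(2 : ℂ)‖ₑ = 2 := by simp [← ofReal_norm]
  refine iSup₂_le fun t ht => iSup_le fun x => ?_
  have h2t : 0 < 2 * t := by positivity
  have hradius : lam * t ^ (1 / m) = (2 * t) ^ (1 / m) := (Real.mul_rpow zero_le_two ht.le).symm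
  calc _ = ballRMS μ ((2 : ℂ) • D t - D (2 * t)) x (t ^ (1 / m)) := by
        congr 1; ext y; simp only [D, Pi.sub_apply, Pi.smul_apply, smul_eq_mul]; ring
    _ ≤ 2 * ballRMS μ (D t) x (t ^ (1 / m)) + ballRMS μ (D (2 * t)) x (t ^ (1 / m)) := by
        simpa only [h2] using ballRMS_smul_sub_le (2 : ℂ) (hD t ht) (hD (2 * t) h2t) x _
    _ ≤ 2 * N + ENNReal.ofReal Cdoub * N := by
        grw [ballRMS_le_of_doubling hCd hdoub (D (2 * t)) x (by positivity) hlam, hradius,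
          hN t ht, hN (2 * t) h2t]
    _ = _ := by rw [ENNReal.ofReal_add zero_le_two (by positivity), ENNReal.ofReal_ofNat, add_mul]

/-- Equivalence of first- and second-order semigroup BMO norms in the
commutative setting: for a sub-Markovian semigroup with kernels `p_t ≥ 0` satisfying the
Chapman–Kolmogorov identity and the Gaussian upper bound `(GE_m)` on a doubling metric
measure space, there is `C > 0` with
`sup_{t>0} sup_x (⨍_{B(x,t^{1/m})} |(I - S_t)² f|² dμ)^{1/2}
  ≤ C sup_{t>0} sup_x (⨍_{B(x,t^{1/m})} |(I - S_t) f|² dμ)^{1/2}`,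
where `S_t f = ∫ p_t(·,y) f(y) dμ(y)` and `(I - S_t)² f = f - 2 S_t f + S_{2t} f`. -/
theorem bmo_second_order_dominated_by_first_order
    {X : Type*} [MetricSpace X] [MeasurableSpace X] [BorelSpace X]
    (μ : Measure X)
    (hball : ∀ (x : X) (r : ℝ), 0 < r → 0 < μ (ball x r) ∧ μ (ball x r) < ⊤)
    (Cd n : ℝ) (hCd : 0 < Cd) (hn : 0 < n)
    (hdoub : ∀ (x : X) (r lam : ℝ), 0 < r → 1 ≤ lam →
      μ (ball x (lam * r)) ≤ ENNReal.ofReal (Cd * lam ^ n) * μ (ball x r))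
    (m : ℝ) (hm : 2 ≤ m)
    (p : ℝ → X → X → ℝ)
    (hmeas : ∀ t : ℝ, 0 < t → Measurable (Function.uncurry (p t)))
    (hpos : ∀ t : ℝ, 0 < t → ∀ x y : X, 0 ≤ p t x y)
    (hsubmarkov : ∀ t : ℝ, 0 < t → ∀ x : X,
      (∫⁻ y, ENNReal.ofReal (p t x y) ∂μ) ≤ 1)
    (hCK : ∀ t r : ℝ, 0 < t → 0 < r → ∀ x y : X,
      (∫ z, p t x z * p r z y ∂μ) = p (t + r) x y)
    (CG cG : ℝ) (hCG : 0 < CG) (hcG : 0 < cG)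
    (hGE : ∀ t : ℝ, 0 < t → ∀ x y : X,
      |p t x y| ≤ CG / (μ (ball x (t ^ (1 / m)))).toReal *
        Real.exp (-cG * (dist x y ^ m / t) ^ (1 / (m - 1)))) :
    ∃ C > (0 : ℝ),
      ∀ f : X → ℂ, Measurable f → (∃ Cb : ℝ, ∀ y : X, ‖f y‖ ≤ Cb) →
        (⨆ (t : ℝ) (_ : 0 < t) (x : X),
            ((μ (ball x (t ^ (1 / m))))⁻¹ *
                ∫⁻ y in ball x (t ^ (1 / m)),
                  (‖f y - 2 * (∫ w, (p t y w : ℂ) * f w ∂μ) +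
                      ∫ w, (p (2 * t) y w : ℂ) * f w ∂μ‖₊ : ℝ≥0∞) ^ 2 ∂μ) ^
              ((1 : ℝ) / 2)) ≤
          ENNReal.ofReal C *
            ⨆ (t : ℝ) (_ : 0 < t) (x : X),
              ((μ (ball x (t ^ (1 / m))))⁻¹ *
                  ∫⁻ y in ball x (t ^ (1 / m)),
                    (‖f y - ∫ w, (p t y w : ℂ) * f w ∂μ‖₊ : ℝ≥0∞) ^ 2 ∂μ) ^
                ((1 : ℝ) / 2) :=
  bmo_second_order_dominated_by_first_order_general μ hball Cd n hCd hdoub m hm p hmeas
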